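/- Let W ∈ 𝔇_n, z ∈ ℂⁿ a row vector, Ω = i(I_n + W)(I_n − W)^{-1}, ζ = 2i·z·(I_n − W)^{-1}, Y = Im Ω, and η = Im ζ. Then Y is invertible and η·Y^{-1}·ᵗη = 2·A(−W, z) + z·(I_n − W)^{-1}·ᵗz + conj(z)·(I_n − conj(W))^{-1}·ᵗconj(z), where −W ∈ 𝔇_n. -/

import Mathlib

open Matrix
open scoped ComplexOrder

/-- Entrywise complex conjugate of a matrix. -/
def cm {n : ℕ} (W : Matrix (Fin n) (Fin n) ℂ) : Matrix (Fin n) (Fin n) ℂ :=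
  W.map (starRingEnd ℂ)

/-- The Siegel disk `𝔇_n`. -/
def SiegelDisk (n : ℕ) : Set (Matrix (Fin n) (Fin n) ℂ) :=
  {W | W.IsSymm ∧ (1 - W * cm W).PosDef}

/-- `A(W,z) = (conj z + ½ z conj W)(I − W conj W)⁻¹ ᵗz + ½ conj z (I − W conj W)⁻¹ W ᵗconj z`. -/
noncomputable def Afun {n : ℕ} (W : Matrix (Fin n) (Fin n) ℂ) (z : Fin n → ℂ) : ℂ :=
  ((star z + (1 / 2 : ℂ) • (z ᵥ* cm W)) ᵥ* (1 - W * cm W)⁻¹) ⬝ᵥ z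
    + (1 / 2 : ℂ) * ((star z ᵥ* ((1 - W * cm W)⁻¹ * W)) ⬝ᵥ star z)

/-!
Write `A = 1 - W`, `B = 1 - conj W` and `D = 1 - W conj W`. Since `(1 + W) A⁻¹ = 2 A⁻¹ - 1`, one
gets `Y = A⁻¹ + B⁻¹ - 1 = A⁻¹ D B⁻¹` and `η = z A⁻¹ + conj z B⁻¹`. As `A`, `B` and `Y` are
symmetric, `η Y⁻¹ ᵗη` splits into the blocks `A⁻¹ Y⁻¹ A⁻¹ = A⁻¹ - conj W D⁻¹`,
`B⁻¹ Y⁻¹ A⁻¹ = D⁻¹` and `B⁻¹ Y⁻¹ B⁻¹ = B⁻¹ - D⁻¹ W`, which are exactly the terms of `2 A(-W, z)`.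
The matrices `A`, `B`, `D` are invertible because `D = 1 - W Wᴴ` is positive definite.
-/

namespace Matrix

variable {ι R : Type*} [Fintype ι] [CommRing R]

lemma vecMul_dotProduct_vecMul (x y : ι → R) (M N : Matrix ι ι R) :
    (x ᵥ* M) ⬝ᵥ (y ᵥ* N) = (x ᵥ* (M * Nᵀ)) ⬝ᵥ y := by
  rw [← mulVec_transpose N y, dotProduct_mulVec, vecMul_vecMul]

lemma vecMul_dotProduct_comm (x y : ι → R) (M : Matrix ι ι R) :
    (x ᵥ* M) ⬝ᵥ y = (y ᵥ* Mᵀ) ⬝ᵥ x := by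
  rw [dotProduct_comm, ← mulVec_transpose, dotProduct_mulVec]

lemma IsSymm.add_vecMul_dotProduct_add {M : Matrix ι ι R} (hM : M.IsSymm) (u v : ι → R) :
    ((u + v) ᵥ* M) ⬝ᵥ (u + v) = (u ᵥ* M) ⬝ᵥ u + 2 * (v ᵥ* M) ⬝ᵥ u + (v ᵥ* M) ⬝ᵥ v := by
  rw [add_vecMul, add_dotProduct, dotProduct_add, dotProduct_add,
    vecMul_dotProduct_comm u v, hM.eq]
  ring

variable [DecidableEq ι] {A B W V : Matrix ι ι R}

lemma one_add_mul_inv_one_sub (hW : IsUnit (1 - W).det) :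
    (1 + W) * (1 - W)⁻¹ = 2 • (1 - W)⁻¹ - 1 := by
  rw [show 1 + W = 2 • 1 - (1 - W) by abel, sub_mul, mul_nonsing_inv _ hW, smul_mul_assoc, one_mul]

lemma inv_add_inv_sub_one (hA : IsUnit A.det) (hB : IsUnit B.det) :
    A⁻¹ + B⁻¹ - 1 = A⁻¹ * (A + B - A * B) * B⁻¹ := by
  rw [mul_sub, mul_add, nonsing_inv_mul _ hA, nonsing_inv_mul_cancel_left _ _ hA, sub_mul, add_mul,
    one_mul, mul_nonsing_inv_cancel_right _ _ hB, mul_nonsing_inv _ hB]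
  abel

lemma inv_one_sub_add_inv_one_sub_sub_one (hW : IsUnit (1 - W).det) (hV : IsUnit (1 - V).det) :
    (1 - W)⁻¹ + (1 - V)⁻¹ - 1 = (1 - W)⁻¹ * (1 - W * V) * (1 - V)⁻¹ := by
  rw [inv_add_inv_sub_one hW hV]
  congr 2
  noncomm_ring

lemma inv_inv_one_sub_add_inv_one_sub_sub_one (hW : IsUnit (1 - W).det)
    (hV : IsUnit (1 - V).det) :
    ((1 - W)⁻¹ + (1 - V)⁻¹ - 1)⁻¹ = (1 - V) * (1 - W * V)⁻¹ * (1 - W) := by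
  rw [inv_one_sub_add_inv_one_sub_sub_one hW hV, mul_inv_rev, mul_inv_rev,
    nonsing_inv_nonsing_inv _ hW, nonsing_inv_nonsing_inv _ hV, Matrix.mul_assoc]

lemma isUnit_inv_one_sub_add_inv_one_sub_sub_one (hW : IsUnit (1 - W).det)
    (hV : IsUnit (1 - V).det) (hWV : IsUnit (1 - W * V).det) :
    IsUnit ((1 - W)⁻¹ + (1 - V)⁻¹ - 1) := by
  rw [isUnit_iff_isUnit_det, inv_one_sub_add_inv_one_sub_sub_one hW hV, det_mul, det_mul,
    det_nonsing_inv, det_nonsing_inv]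
  exact ((isUnit_ringInverse.mpr hW).mul hWV).mul (isUnit_ringInverse.mpr hV)

lemma inv_one_sub_mul_mul_inv_one_sub_left (hW : IsUnit (1 - W).det)
    (hWV : IsUnit (1 - W * V).det) :
    (1 - W)⁻¹ * ((1 - V) * (1 - W * V)⁻¹ * (1 - W)) * (1 - W)⁻¹
      = (1 - W)⁻¹ - V * (1 - W * V)⁻¹ := by
  have hB : 1 - V = (1 - W * V) - (1 - W) * V := by noncomm_ring
  set A := 1 - W
  set D := 1 - W * V
  simp only [Matrix.mul_assoc]
  rw [mul_nonsing_inv _ hW, Matrix.mul_one, hB, sub_mul, mul_nonsing_inv _ hWV, mul_sub,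
    Matrix.mul_one, Matrix.mul_assoc, nonsing_inv_mul_cancel_left _ _ hW]

lemma inv_one_sub_mul_mul_inv_one_sub_cross (hW : IsUnit (1 - W).det)
    (hV : IsUnit (1 - V).det) :
    (1 - V)⁻¹ * ((1 - V) * (1 - W * V)⁻¹ * (1 - W)) * (1 - W)⁻¹ = (1 - W * V)⁻¹ := by
  simp only [Matrix.mul_assoc]
  rw [mul_nonsing_inv _ hW, Matrix.mul_one, nonsing_inv_mul_cancel_left _ _ hV]

lemma inv_one_sub_mul_mul_inv_one_sub_right (hV : IsUnit (1 - V).det)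
    (hWV : IsUnit (1 - W * V).det) :
    (1 - V)⁻¹ * ((1 - V) * (1 - W * V)⁻¹ * (1 - W)) * (1 - V)⁻¹
      = (1 - V)⁻¹ - (1 - W * V)⁻¹ * W := by
  have hA : 1 - W = (1 - W * V) - W * (1 - V) := by noncomm_ring
  set B := 1 - V
  set D := 1 - W * V
  simp only [Matrix.mul_assoc]
  rw [nonsing_inv_mul_cancel_left _ _ hV, hA, sub_mul, mul_nonsing_inv_cancel_right _ _ hV, mul_sub,
    nonsing_inv_mul_cancel_left _ _ hWV]

lemma vecMul_dotProduct_inv_inv_one_sub_add_inv_one_sub_sub_one (hWs : W.IsSymm)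
    (hVs : V.IsSymm) (hW : IsUnit (1 - W).det) (hV : IsUnit (1 - V).det)
    (hWV : IsUnit (1 - W * V).det) (x y : ι → R) :
    ((x ᵥ* (1 - W)⁻¹ + y ᵥ* (1 - V)⁻¹) ᵥ* ((1 - W)⁻¹ + (1 - V)⁻¹ - 1)⁻¹)
        ⬝ᵥ (x ᵥ* (1 - W)⁻¹ + y ᵥ* (1 - V)⁻¹)
      = (x ᵥ* (1 - W)⁻¹) ⬝ᵥ x - (x ᵥ* (V * (1 - W * V)⁻¹)) ⬝ᵥ x
        + 2 * (y ᵥ* (1 - W * V)⁻¹) ⬝ᵥ x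
        + (y ᵥ* (1 - V)⁻¹) ⬝ᵥ y - (y ᵥ* ((1 - W * V)⁻¹ * W)) ⬝ᵥ y := by
  have hWinv : (1 - W)⁻¹.IsSymm := (isSymm_one.sub hWs).inv
  have hVinv : (1 - V)⁻¹.IsSymm := (isSymm_one.sub hVs).inv
  rw [((hWinv.add hVinv).sub isSymm_one).inv.add_vecMul_dotProduct_add, vecMul_vecMul,
    vecMul_vecMul, vecMul_dotProduct_vecMul x, vecMul_dotProduct_vecMul y,
    vecMul_dotProduct_vecMul y, hWinv.eq, hVinv.eq, inv_inv_one_sub_add_inv_one_sub_sub_one hW hV,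
    inv_one_sub_mul_mul_inv_one_sub_left hW hWV, inv_one_sub_mul_mul_inv_one_sub_cross hW hV,
    inv_one_sub_mul_mul_inv_one_sub_right hV hWV, vecMul_sub, vecMul_sub, sub_dotProduct,
    sub_dotProduct]
  ring

end Matrix

lemma Matrix.isUnit_one_sub_conjTranspose_of_posDef {𝕜 ι : Type*} [RCLike 𝕜] [Fintype ι]
    [DecidableEq ι] {M : Matrix ι ι 𝕜} (hM : (1 - M * Mᴴ).PosDef) : IsUnit (1 - Mᴴ) := by
  rw [isUnit_iff_isUnit_det, isUnit_iff_ne_zero]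
  intro hdet
  obtain ⟨v, hv, hfix⟩ := exists_mulVec_eq_zero_iff.mpr hdet
  have hMv : Mᴴ *ᵥ v = v := by
    rw [sub_mulVec, one_mulVec, sub_eq_zero] at hfix
    exact hfix.symm
  -- a fixed vector of `Mᴴ` is isotropic for `1 - M Mᴴ`
  have hzero : star v ⬝ᵥ ((1 - M * Mᴴ) *ᵥ v) = 0 := by
    rw [sub_mulVec, one_mulVec, ← mulVec_mulVec, hMv, dotProduct_sub, dotProduct_mulVec,
      ← conjTranspose_conjTranspose M, ← star_mulVec, hMv, sub_self]
  exact (hM.dotProduct_mulVec_pos hv).ne' hzero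

section

variable {n : ℕ}

lemma cm_eq_mapMatrix (M : Matrix (Fin n) (Fin n) ℂ) : cm M = (starRingEnd ℂ).mapMatrix M := rfl

lemma cm_inv (M : Matrix (Fin n) (Fin n) ℂ) : cm M⁻¹ = (cm M)⁻¹ := by
  change M⁻¹ᴴᵀ = Mᴴᵀ⁻¹
  rw [conjTranspose_nonsing_inv, transpose_nonsing_inv]

lemma cm_smul (c : ℂ) (M : Matrix (Fin n) (Fin n) ℂ) : cm (c • M) = starRingEnd ℂ c • cm M := by
  ext i j; simp [cm]

lemma cm_neg (M : Matrix (Fin n) (Fin n) ℂ) : cm (-M) = -cm M := by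
  simp only [cm_eq_mapMatrix, map_neg]

lemma cm_one_sub (W : Matrix (Fin n) (Fin n) ℂ) : cm (1 - W) = 1 - cm W := by
  simp only [cm_eq_mapMatrix, map_sub, map_one]

lemma cm_one_add_mul_inv_one_sub (W : Matrix (Fin n) (Fin n) ℂ) :
    cm ((1 + W) * (1 - W)⁻¹) = (1 + cm W) * (1 - cm W)⁻¹ := by
  rw [cm_eq_mapMatrix, map_mul, ← cm_eq_mapMatrix (1 - W)⁻¹, cm_inv]
  simp only [cm_eq_mapMatrix, map_add, map_sub, map_one]

lemma star_vecMul_eq_vecMul_cm (z : Fin n → ℂ) (M : Matrix (Fin n) (Fin n) ℂ) :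
    star (z ᵥ* M) = star z ᵥ* cm M := by
  rw [star_vecMul, ← mulVec_transpose]
  rfl

lemma two_mul_Afun_neg (W : Matrix (Fin n) (Fin n) ℂ) (z : Fin n → ℂ) :
    2 * Afun (-W) z
      = 2 * (star z ᵥ* (1 - W * cm W)⁻¹) ⬝ᵥ z - (z ᵥ* (cm W * (1 - W * cm W)⁻¹)) ⬝ᵥ z
        - (star z ᵥ* ((1 - W * cm W)⁻¹ * W)) ⬝ᵥ star z := by
  rw [Afun, cm_neg, neg_mul_neg, vecMul_neg, smul_neg, ← sub_eq_add_neg, sub_vecMul, smul_vecMul,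
    vecMul_vecMul, sub_dotProduct, smul_dotProduct, mul_neg, vecMul_neg, neg_dotProduct,
    smul_eq_mul]
  ring

lemma imPart_I_smul_one_add_mul_inv_one_sub {W : Matrix (Fin n) (Fin n) ℂ}
    (hW : IsUnit (1 - W).det) (hcW : IsUnit (1 - cm W).det) :
    (2 * Complex.I)⁻¹ • (Complex.I • ((1 + W) * (1 - W)⁻¹)
        - cm (Complex.I • ((1 + W) * (1 - W)⁻¹)))
      = (1 - W)⁻¹ + (1 - cm W)⁻¹ - 1 := by
  rw [cm_smul, cm_one_add_mul_inv_one_sub, Complex.conj_I, Matrix.one_add_mul_inv_one_sub hW,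
    Matrix.one_add_mul_inv_one_sub hcW, neg_smul, sub_neg_eq_add, ← smul_add, smul_smul,
    show (2 * Complex.I)⁻¹ * Complex.I = 2⁻¹ by field_simp]
  module

lemma imPart_two_I_smul (v : Fin n → ℂ) :
    (2 * Complex.I)⁻¹ • ((2 * Complex.I) • v - star ((2 * Complex.I) • v)) = v + star v := by
  have h2I : (2 * Complex.I) ≠ 0 := by simp
  rw [star_smul, show star (2 * Complex.I) = -(2 * Complex.I) by simp, neg_smul,
    sub_neg_eq_add, ← smul_add, smul_smul, inv_mul_cancel₀ h2I, one_smul]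

namespace SiegelDisk

variable {W : Matrix (Fin n) (Fin n) ℂ}

lemma cm_eq_conjTranspose (hW : W ∈ SiegelDisk n) : cm W = Wᴴ := by
  change Wᵀᴴ = Wᴴ
  rw [hW.1.eq]

lemma isSymm_cm (hW : W ∈ SiegelDisk n) : (cm W).IsSymm :=
  hW.1.map _

lemma neg_mem (hW : W ∈ SiegelDisk n) : -W ∈ SiegelDisk n := by
  refine ⟨hW.1.neg, ?_⟩
  rw [cm_neg, neg_mul_neg]
  exact hW.2

lemma isUnit_det_one_sub_cm (hW : W ∈ SiegelDisk n) : IsUnit (1 - cm W).det := by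
  have h := hW.2
  rw [cm_eq_conjTranspose hW] at h ⊢
  exact (isUnit_iff_isUnit_det _).mp (isUnit_one_sub_conjTranspose_of_posDef h)

lemma isUnit_det_one_sub (hW : W ∈ SiegelDisk n) : IsUnit (1 - W).det := by
  have h := isUnit_det_one_sub_cm hW
  rw [cm_eq_conjTranspose hW, ← isUnit_iff_isUnit_det, ← conjTranspose_one, ← conjTranspose_sub,
    isUnit_conjTranspose] at h
  exact (isUnit_iff_isUnit_det _).mp h

lemma isUnit_det_one_sub_mul_cm (hW : W ∈ SiegelDisk n) : IsUnit (1 - W * cm W).det :=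
  (isUnit_iff_isUnit_det _).mp hW.2.isUnit

end SiegelDisk

end

theorem stmt8 (n : ℕ) (W : Matrix (Fin n) (Fin n) ℂ) (hW : W ∈ SiegelDisk n)
    (z : Fin n → ℂ) :
    -W ∈ SiegelDisk n ∧
    ∀ Ω ζ Y η, Ω = Complex.I • ((1 + W) * (1 - W)⁻¹) →
      ζ = (2 * Complex.I) • (z ᵥ* (1 - W)⁻¹) →
      Y = (2 * Complex.I)⁻¹ • (Ω - cm Ω) →
      η = (2 * Complex.I)⁻¹ • (ζ - star ζ) →
      IsUnit Y ∧
      (η ᵥ* Y⁻¹) ⬝ᵥ η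
        = 2 * Afun (-W) z + (z ᵥ* (1 - W)⁻¹) ⬝ᵥ z
          + (star z ᵥ* (1 - cm W)⁻¹) ⬝ᵥ star z := by
  refine ⟨SiegelDisk.neg_mem hW, ?_⟩
  rintro Ω ζ Y η rfl rfl rfl rfl
  have hA := SiegelDisk.isUnit_det_one_sub hW
  have hB := SiegelDisk.isUnit_det_one_sub_cm hW
  have hD := SiegelDisk.isUnit_det_one_sub_mul_cm hW
  rw [imPart_I_smul_one_add_mul_inv_one_sub hA hB, imPart_two_I_smul, star_vecMul_eq_vecMul_cm,
    cm_inv, cm_one_sub]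
  refine ⟨isUnit_inv_one_sub_add_inv_one_sub_sub_one hA hB hD, ?_⟩
  rw [vecMul_dotProduct_inv_inv_one_sub_add_inv_one_sub_sub_one hW.1 (SiegelDisk.isSymm_cm hW)
    hA hB hD, two_mul_Afun_neg]
  ring
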